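/- arXiv:1411.5508 — 3 statements merged into one kernel-verified Lean document; each statement's English description precedes it below -/
import Mathlib

section
/- Let f, g : ℝ → ℝ be continuous, strictly increasing, invertible with f(0) = g(0) = 0. Suppose x is a C¹ solution of (g ∘ x')'(t) + f(x(t)) = 0 with x(a) = c₁, x'(a) = c₂ on an interval containing a. Then for all t in that interval, F(x(t)) + G(g(x'(t))) = F(c₁) + G(g(c₂)), where F(t) = ∫₀^t f(s) ds and G(t) = ∫₀^t g⁻¹(s) ds. -/
/-- Conservation of energy: along any solution of `(g∘x')' + f(x) = 0` one has
`F(x(t)) + G(g(x'(t))) = F(c₁) + G(g(c₂))`, where `F = ∫₀ f` and `G = ∫₀ g⁻¹`. -/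
theorem stmt4 (f g ginv : ℝ → ℝ)
    (hf : Continuous f) (hfm : StrictMono f) (hf0 : f 0 = 0)
    (hfbij : Function.Bijective f)
    (hg : Continuous g) (hgm : StrictMono g) (hg0 : g 0 = 0)
    (hgbij : Function.Bijective g)
    (hginv : Function.LeftInverse ginv g) (hginv' : Function.RightInverse ginv g)
    (I : Set ℝ) (hIo : IsOpen I) (hIc : I.OrdConnected)
    (a c₁ c₂ : ℝ) (haI : a ∈ I)
    (x : ℝ → ℝ)
    (hx : ContDiffOn ℝ 1 x I)
    (heq : ∀ t ∈ I, HasDerivAt (fun s => g (deriv x s)) (-(f (x t))) t)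
    (hic : x a = c₁) (hic' : deriv x a = c₂) :
    ∀ t ∈ I,
      (∫ s in (0:ℝ)..(x t), f s) + (∫ s in (0:ℝ)..(g (deriv x t)), ginv s)
        = (∫ s in (0:ℝ)..c₁, f s) + (∫ s in (0:ℝ)..(g c₂), ginv s) := by
  -- continuity of ginv
  have hgio : ginv = ⇑(hgm.orderIsoOfSurjective g hgbij.2).symm := by
    funext y
    apply hgbij.1
    rw [hginv' y]
    exact ((hgm.orderIsoOfSurjective g hgbij.2).apply_symm_apply y).symm
  have hginvC : Continuous ginv := by
    rw [hgio]; exact (hgm.orderIsoOfSurjective g hgbij.2).symm.continuous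
  set E : ℝ → ℝ := fun t =>
    (∫ s in (0:ℝ)..(x t), f s) + (∫ s in (0:ℝ)..(g (deriv x t)), ginv s) with hE
  have hx' : ∀ u ∈ I, HasDerivAt x (deriv x u) u := fun u huI =>
    (((hx.differentiableOn one_ne_zero) u huI).differentiableAt
      (hIo.mem_nhds huI)).hasDerivAt
  have hderiv : ∀ u ∈ I, HasDerivAt E 0 u := by
    intro u huI
    have h1 : HasDerivAt (fun v => ∫ s in (0:ℝ)..v, f s) (f (x u)) (x u) :=
      (hf.integral_hasStrictDerivAt 0 (x u)).hasDerivAt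
    have h1' := h1.comp u (hx' u huI)
    have h2 : HasDerivAt (fun v => ∫ s in (0:ℝ)..v, ginv s)
        (ginv (g (deriv x u))) (g (deriv x u)) :=
      (hginvC.integral_hasStrictDerivAt 0 (g (deriv x u))).hasDerivAt
    have h2' := h2.comp u (heq u huI)
    have h3 := h1'.add h2'
    rw [show f (x u) * deriv x u + ginv (g (deriv x u)) * -(f (x u)) = 0 from by
      rw [hginv]; ring] at h3
    exact h3
  have hconv : Convex ℝ I := convex_iff_ordConnected.mpr hIc
  intro t htI
  have key : E t = E a := by
    apply hconv.is_const_of_fderivWithin_eq_zero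
      (fun u hu => (hderiv u hu).differentiableAt.differentiableWithinAt)
      (fun u hu => ?_) htI haI
    rw [fderivWithin_eq_fderiv (hIo.uniqueDiffOn u hu) (hderiv u hu).differentiableAt,
      (hderiv u hu).hasFDerivAt.fderiv]
    ext v
    simp
  simpa [hE, hic, hic'] using key
end

section
/- Let f : ℝ → ℝ be continuous and strictly increasing with f(0) = 0, f(s t) = h(s) f(t) for some function h and all s,t, and let F(t) = ∫₀^t f(s) ds. Then F(rt) = r h(r) F(t) for all r, t ∈ ℝ; consequently, setting h̃(r) := r h(r), we have h̃(r) = F(r)/F(1), h̃ restricted to [0,∞) is invertible, and F₊⁻¹(h̃(r) t) = r F₊⁻¹(t) for r, t > 0 where F₊⁻¹ is the inverse of F restricted to [0,∞). -/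
/-- If `f(st) = h(s) f(t)` then `F(rt) = r h(r) F(t)` for `F = ∫₀ f`; setting
`h̃(r) = r h(r)` one has `h̃(r) = F(r)/F(1)`, `h̃` is injective on `[0,∞)`, and
`F₊⁻¹(h̃(r) t) = r F₊⁻¹(t)`. -/
theorem stmt13 (f h F Fpinv : ℝ → ℝ)
    (hf : Continuous f) (hfm : StrictMono f) (hf0 : f 0 = 0)
    (hmul : ∀ s t : ℝ, f (s * t) = h s * f t)
    (hF : ∀ t, F t = ∫ s in (0:ℝ)..t, f s)
    (hFpinv : ∀ t : ℝ, 0 ≤ t → Fpinv (F t) = t) :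
    (∀ r t : ℝ, F (r * t) = r * h r * F t) ∧
    (∀ r : ℝ, r * h r = F r / F 1) ∧
    Set.InjOn (fun r : ℝ => r * h r) (Set.Ici 0) ∧
    (∀ r : ℝ, 0 < r → ∀ t ∈ F '' Set.Ici (0:ℝ),
      Fpinv (r * h r * t) = r * Fpinv t) := by
  have h1 : ∀ r t : ℝ, F (r * t) = r * h r * F t := by
    intro r t
    have key : (r • ∫ x in (0:ℝ)..t, f (r * x)) = ∫ x in (r*0:ℝ)..(r*t), f x :=
      intervalIntegral.smul_integral_comp_mul_left f r
    rw [hF, hF]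
    have : (∫ x in (0:ℝ)..t, f (r * x)) = h r * ∫ x in (0:ℝ)..t, f x := by
      simp_rw [hmul r]
      exact intervalIntegral.integral_const_mul _ _
    rw [mul_zero] at key
    rw [← key, this, smul_eq_mul]
    ring
  -- F strictly mono on [0,∞)
  have hFmono : StrictMonoOn F (Set.Ici 0) := by
    intro a ha b hb hab
    have hiab : IntervalIntegrable f MeasureTheory.volume a b := hf.intervalIntegrable a b
    have hia : IntervalIntegrable f MeasureTheory.volume 0 a := hf.intervalIntegrable 0 a
    have hib : IntervalIntegrable f MeasureTheory.volume 0 b := hf.intervalIntegrable 0 b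
    have hsub : F b - F a = ∫ x in a..b, f x := by
      rw [hF, hF]
      exact intervalIntegral.integral_interval_sub_left hib hia
    have hpos : 0 < ∫ x in a..b, f x := by
      apply intervalIntegral.intervalIntegral_pos_of_pos_on hiab _ hab
      intro x hx
      have : (0:ℝ) < x := lt_of_le_of_lt ha hx.1
      calc (0:ℝ) = f 0 := hf0.symm
        _ < f x := hfm this
    linarith [hsub ▸ hpos]
  have hF1 : 0 < F 1 := by
    have := hFmono (Set.self_mem_Ici) (by norm_num : (1:ℝ) ∈ Set.Ici 0) one_pos
    simpa [hF] using this
  have h2 : ∀ r : ℝ, r * h r = F r / F 1 := by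
    intro r
    have := h1 r 1
    rw [mul_one] at this
    field_simp [this]
    linarith
  refine ⟨h1, h2, ?_, ?_⟩
  · intro a ha b hb hab
    simp only [h2] at hab
    exact hFmono.injOn ha hb (by field_simp at hab; linarith)
  · rintro r hr t ⟨u, hu, rfl⟩
    rw [← h1, hFpinv _ (mul_nonneg hr.le hu), hFpinv _ hu]
end

section
/- If f is odd (so F is even), the period formula T = ∫_{F₋⁻¹(k)}^{F₊⁻¹(k)} [1/f(F₊⁻¹((1+λ)F(c) − λF(r))) − 1/f(F₋⁻¹((1+λ)F(c) − λF(r)))] dr with k = (1+λ⁻¹)F(c) reduces, via the change of variables r = cs, to T = ∫₀^{F₊⁻¹((1+λ⁻¹)F(c))/c} 4c dr / f(F₊⁻¹((1+λ)F(c) − λ F(c r))). -/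
open MeasureTheory intervalIntegral

/-- For odd `f`, via the change of variables `r = cs`, the period formula reduces
to `T = ∫₀^{F₊⁻¹((1+λ⁻¹)F(c))/c} 4c dr / f(F₊⁻¹((1+λ)F(c) − λF(cr)))`. -/
theorem stmt15 (f F Fp Fm : ℝ → ℝ)
    (hf : Continuous f) (hodd : ∀ t : ℝ, f (-t) = -f t)
    (hfm : StrictMono f) (hf0 : f 0 = 0)
    (hF : ∀ t, F t = ∫ s in (0:ℝ)..t, f s)
    (hFp : ∀ t : ℝ, 0 ≤ t → Fp (F t) = t)
    (hFp' : ∀ y ∈ F '' Set.Ici (0:ℝ), F (Fp y) = y)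
    (hFm : ∀ t : ℝ, t ≤ 0 → Fm (F t) = t)
    (hFm' : ∀ y ∈ F '' Set.Iic (0:ℝ), F (Fm y) = y)
    (c lam : ℝ) (hc : 0 < c) (hlam : 0 < lam)
    (hrange : (1 + lam⁻¹) * F c ∈ F '' Set.Ici (0:ℝ)) :
    (∫ r in Fm ((1 + lam⁻¹) * F c)..Fp ((1 + lam⁻¹) * F c),
        (1 / f (Fp ((1 + lam) * F c - lam * F r))
          - 1 / f (Fm ((1 + lam) * F c - lam * F r))))
      = ∫ r in (0:ℝ)..(Fp ((1 + lam⁻¹) * F c) / c),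
          4 * c / f (Fp ((1 + lam) * F c - lam * F (c * r))) := by
  have hfint : ∀ a b : ℝ, IntervalIntegrable f volume a b :=
    fun a b => hf.intervalIntegrable a b
  have hF0 : F 0 = 0 := by rw [hF]; simp
  have hFcont : Continuous F := by
    rw [show F = fun t => ∫ s in (0:ℝ)..t, f s from funext hF]
    exact intervalIntegral.continuous_primitive hfint 0
  have hfnn : ∀ t : ℝ, 0 ≤ t → 0 ≤ f t := by
    intro t ht
    rw [← hf0]
    exact hfm.monotone ht
  -- F is even
  have hFeven : ∀ t : ℝ, F (-t) = F t := by
    intro t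
    have h1 : (∫ x in (0:ℝ)..t, f (-x)) = ∫ x in (-t)..(-(0:ℝ)), f x :=
      intervalIntegral.integral_comp_neg f
    simp only [hodd, neg_zero, intervalIntegral.integral_neg] at h1
    rw [hF, hF t, intervalIntegral.integral_symm]
    linarith [h1]
  -- F is monotone on [0, ∞)
  have hFsub : ∀ s t : ℝ, F t - F s = ∫ x in s..t, f x := by
    intro s t
    rw [hF, hF]
    exact intervalIntegral.integral_interval_sub_left (hfint 0 t) (hfint 0 s)
  have hFmono : ∀ s t : ℝ, 0 ≤ s → s ≤ t → F s ≤ F t := by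
    intro s t hs hst
    have h := hFsub s t
    have : 0 ≤ ∫ x in s..t, f x :=
      intervalIntegral.integral_nonneg hst (fun u hu => hfnn u (le_trans hs hu.1))
    linarith
  have hFnn : ∀ t : ℝ, 0 ≤ t → 0 ≤ F t := by
    intro t ht
    have := hFmono 0 t le_rfl ht
    linarith [hF0 ▸ this]
  -- surjectivity of F onto [0, ∞)
  have hsurj : ∀ y : ℝ, 0 ≤ y → ∃ t : ℝ, 0 ≤ t ∧ F t = y := by
    intro y hy
    have hf1 : 0 < f 1 := by
      have := hfm (show (0:ℝ) < 1 by norm_num)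
      rwa [hf0] at this
    set T : ℝ := max 1 (1 + y / f 1) with hT
    have hT1 : (1:ℝ) ≤ T := le_max_left _ _
    have hTy : y ≤ (T - 1) * f 1 := by
      have h2 : 1 + y / f 1 ≤ T := le_max_right _ _
      have : y / f 1 ≤ T - 1 := by linarith
      calc y = y / f 1 * f 1 := by field_simp
        _ ≤ (T - 1) * f 1 := by nlinarith
    have hint : ∫ x in (1:ℝ)..T, f x ≥ (T - 1) * f 1 := by
      have hmono : (∫ x in (1:ℝ)..T, (fun _ => f 1) x) ≤ ∫ x in (1:ℝ)..T, f x := by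
        apply intervalIntegral.integral_mono_on hT1 (intervalIntegrable_const) (hfint 1 T)
        intro x hx
        exact hfm.monotone hx.1
      simpa using hmono
    have hFT : y ≤ F T := by
      have h1 := hFsub 1 T
      have hF1 : 0 ≤ F 1 := hFnn 1 zero_le_one
      linarith
    have hsub : Set.Icc (F 0) (F T) ⊆ F '' Set.Icc 0 T :=
      intermediate_value_Icc (le_trans zero_le_one hT1) hFcont.continuousOn
    obtain ⟨t, ht, hFt⟩ := hsub ⟨by rw [hF0]; exact hy, hFT⟩
    exact ⟨t, ht.1, hFt⟩
  -- the point a := Fp k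
  obtain ⟨t0, ht0, hFt0⟩ := hrange
  set k : ℝ := (1 + lam⁻¹) * F c with hk
  set a : ℝ := Fp k with ha
  have hFa : F a = k := hFp' k ⟨t0, ht0, hFt0⟩
  have ha0 : 0 ≤ a := by
    have : a = t0 := by rw [ha, ← hFt0, hFp t0 ht0]
    rw [this]; exact ht0
  have hFmk : Fm k = -a := by
    have hFna : F (-a) = k := by rw [hFeven, hFa]
    rw [← hFna]
    exact hFm (-a) (by linarith)
  have hFc0 : 0 ≤ F c := hFnn c hc.le
  have hlk : lam * k = (1 + lam) * F c := by
    have h : lam * (1 + lam⁻¹) = 1 + lam := by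
      rw [mul_add, mul_one, mul_inv_cancel₀ (ne_of_gt hlam)]
      ring
    rw [hk, ← mul_assoc, h]
  -- pointwise identity on [0, a]
  have hpt : ∀ r ∈ Set.Icc (0:ℝ) a,
      (1 / f (Fp ((1 + lam) * F c - lam * F r))
        - 1 / f (Fm ((1 + lam) * F c - lam * F r)))
      = 2 / f (Fp ((1 + lam) * F c - lam * F r)) := by
    intro r hr
    have hFr0 : 0 ≤ F r := hFnn r hr.1
    have hFrk : F r ≤ k := hFa ▸ hFmono r a hr.1 hr.2
    have hu0 : 0 ≤ (1 + lam) * F c - lam * F r := by nlinarith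
    obtain ⟨t, ht0', hFt⟩ := hsurj _ hu0
    have h1 : Fp ((1 + lam) * F c - lam * F r) = t := by rw [← hFt, hFp t ht0']
    have h2 : Fm ((1 + lam) * F c - lam * F r) = -t := by
      rw [← hFt, ← hFeven t, hFm (-t) (by linarith)]
    rw [h1, h2, hodd t, div_neg]
    ring
  -- evenness of the integrand
  set g : ℝ → ℝ := fun r =>
    1 / f (Fp ((1 + lam) * F c - lam * F r)) - 1 / f (Fm ((1 + lam) * F c - lam * F r))
    with hg
  have hgeven : ∀ r : ℝ, g (-r) = g r := by
    intro r
    simp only [hg, hFeven]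
  -- symmetry: ∫_{-a}^{a} g = 2 ∫_0^a g (works also when g is not integrable)
  have hflip : ∫ r in (-a)..(0:ℝ), g r = ∫ r in (0:ℝ)..a, g r := by
    have h := intervalIntegral.integral_comp_neg (a := (0:ℝ)) (b := a) g
    simp only [hgeven, neg_zero] at h
    exact h.symm
  have hsplit : ∫ r in (-a)..a, g r = 2 * ∫ r in (0:ℝ)..a, g r := by
    by_cases hint : IntervalIntegrable g volume 0 a
    · have hint' : IntervalIntegrable g volume (-a) 0 := by
        have h := (IntervalIntegrable.iff_comp_neg (f := g) (a := 0) (b := a)).mp hint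
        simp only [hgeven, neg_zero] at h
        exact h.symm
      rw [← intervalIntegral.integral_add_adjacent_intervals hint' hint, hflip]
      ring
    · rw [intervalIntegral.integral_undef hint, intervalIntegral.integral_undef, mul_zero]
      intro hI
      apply hint
      apply hI.mono_set
      apply Set.uIcc_subset_uIcc
      · rw [Set.mem_uIcc]; left; constructor <;> linarith
      · rw [Set.mem_uIcc]; left; constructor <;> linarith
  -- change of variables on the right-hand side
  have hRHS : (∫ r in (0:ℝ)..(a / c),
        4 * c / f (Fp ((1 + lam) * F c - lam * F (c * r))))
      = 2 * ∫ r in (0:ℝ)..a, 2 / f (Fp ((1 + lam) * F c - lam * F r)) := by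
    have h := intervalIntegral.integral_comp_mul_left
      (fun x => 4 * c / f (Fp ((1 + lam) * F c - lam * F x))) (a := (0:ℝ)) (b := a / c)
      (ne_of_gt hc)
    rw [mul_zero, mul_div_cancel₀ a (ne_of_gt hc)] at h
    rw [h, smul_eq_mul]
    rw [show (∫ x in (0:ℝ)..a, 4 * c / f (Fp ((1 + lam) * F c - lam * F x)))
        = ∫ x in (0:ℝ)..a, (2 * c) * (2 / f (Fp ((1 + lam) * F c - lam * F x))) from
      intervalIntegral.integral_congr (fun x _ => by ring)]
    rw [intervalIntegral.integral_const_mul]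
    field_simp
  -- assemble
  rw [hFmk, hsplit, hRHS]
  congr 1
  apply intervalIntegral.integral_congr
  intro x hx
  rw [Set.uIcc_of_le ha0] at hx
  exact hpt x hx
end
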